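/- arXiv:2404.04647 — 5 statements merged into one kernel-verified Lean document; each statement's English description precedes it below -/
import Mathlib

section
/- Fix ε₁ > 0 and ε₂ > 0. The Fenchel conjugate of the elastic net penalty h⋆(x) = ε₁‖x‖₁ + ε₂‖x‖₂² on ℝᵈ is the function z ↦ Σ_{i=1}^d PQ_{ε₁,ε₂}(z_i); that is, for every z ∈ ℝᵈ, sup_{x ∈ ℝᵈ} (⟨x, z⟩ − ε₁‖x‖₁ − ε₂‖x‖₂²) = Σ_{i=1}^d PQ_{ε₁,ε₂}(z_i). -/
/-- The piecewise quadratic function `PQ_{ε₁,ε₂}`. -/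
noncomputable def PQ (e1 e2 : ℝ) (z : ℝ) : ℝ :=
  if e1 < z then (z - e1) ^ 2 / (4 * e2)
  else if z < -e1 then (z + e1) ^ 2 / (4 * e2)
  else 0

lemma PQ_upper (e1 e2 : ℝ) (he1 : 0 < e1) (he2 : 0 < e2) (x z : ℝ) :
    x * z - e1 * |x| - e2 * x ^ 2 ≤ PQ e1 e2 z := by
  unfold PQ
  split_ifs with h1 h2
  · rw [le_div_iff₀ (by positivity)]
    have hx : x * z ≤ |x| * z :=
      mul_le_mul_of_nonneg_right (le_abs_self x) (le_of_lt (lt_trans he1 h1))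
    have hx4 : 4 * e2 * (x * z) ≤ 4 * e2 * (|x| * z) :=
      mul_le_mul_of_nonneg_left hx (by positivity)
    have hs : e2 ^ 2 * |x| ^ 2 = e2 ^ 2 * x ^ 2 := by rw [sq_abs]
    nlinarith [hs, abs_nonneg x, sq_nonneg ((z - e1) - 2 * e2 * |x|)]
  · rw [le_div_iff₀ (by positivity)]
    have hx : x * z ≤ |x| * (-z) := by
      calc x * z ≤ |x * z| := le_abs_self _
        _ = |x| * |z| := abs_mul x z
        _ = |x| * (-z) := by rw [abs_of_neg (show z < 0 by linarith)]
    have hx4 : 4 * e2 * (x * z) ≤ 4 * e2 * (|x| * (-z)) :=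
      mul_le_mul_of_nonneg_left hx (by positivity)
    have hs : e2 ^ 2 * |x| ^ 2 = e2 ^ 2 * x ^ 2 := by rw [sq_abs]
    nlinarith [hs, abs_nonneg x, sq_nonneg ((z + e1) + 2 * e2 * |x|)]
  · push_neg at h1 h2
    nlinarith [le_abs_self x, neg_abs_le x, sq_abs x, abs_nonneg x]

noncomputable def xstar (e1 e2 z : ℝ) : ℝ :=
  if e1 < z then (z - e1) / (2 * e2)
  else if z < -e1 then (z + e1) / (2 * e2)
  else 0

lemma PQ_attain (e1 e2 : ℝ) (he1 : 0 < e1) (he2 : 0 < e2) (z : ℝ) :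
    xstar e1 e2 z * z - e1 * |xstar e1 e2 z| - e2 * xstar e1 e2 z ^ 2 = PQ e1 e2 z := by
  unfold xstar PQ
  split_ifs with h1 h2
  · rw [abs_of_pos (div_pos (by linarith) (by positivity))]
    field_simp
    ring
  · rw [abs_of_neg (by apply div_neg_of_neg_of_pos (by linarith) (by positivity))]
    field_simp
    ring
  · simp

/-- for `ε₁, ε₂ > 0`, the Fenchel conjugate of the elastic net penalty
`x ↦ ε₁‖x‖₁ + ε₂‖x‖₂²` on `ℝᵈ` is `z ↦ Σᵢ PQ_{ε₁,ε₂}(zᵢ)`. -/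
theorem stmt_7 {d : ℕ} (e1 e2 : ℝ) (he1 : 0 < e1) (he2 : 0 < e2) (z : Fin d → ℝ) :
    (⨆ x : Fin d → ℝ,
        (((∑ i, x i * z i) - e1 * ∑ i, |x i| - e2 * ∑ i, x i ^ 2 : ℝ) : EReal))
      = ((∑ i, PQ e1 e2 (z i) : ℝ) : EReal) := by
  have key : ∀ x : Fin d → ℝ,
      (∑ i, x i * z i) - e1 * ∑ i, |x i| - e2 * ∑ i, x i ^ 2
        = ∑ i, (x i * z i - e1 * |x i| - e2 * x i ^ 2) := by
    intro x
    rw [Finset.mul_sum, Finset.mul_sum, ← Finset.sum_sub_distrib, ← Finset.sum_sub_distrib]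
  apply le_antisymm
  · apply iSup_le
    intro x
    rw [EReal.coe_le_coe_iff, key]
    exact Finset.sum_le_sum fun i _ => PQ_upper e1 e2 he1 he2 (x i) (z i)
  · refine le_trans (le_of_eq ?_) (le_iSup _ (fun i => xstar e1 e2 (z i)))
    rw [EReal.coe_eq_coe_iff, key]
    exact (Finset.sum_congr rfl fun i _ => (PQ_attain e1 e2 he1 he2 (z i)).symm)
end

section
/- Fix ε₁ > 0 and ε₂ > 0. The Fenchel conjugate of the function h(δ) = Σ_{i=1}^d PQ_{ε₁,ε₂}(δ_i) on ℝᵈ is the elastic net penalty; that is, for every z ∈ ℝᵈ, sup_{δ ∈ ℝᵈ} (⟨δ, z⟩ − Σ_{i=1}^d PQ_{ε₁,ε₂}(δ_i)) = ε₁‖z‖₁ + ε₂‖z‖₂². -/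
lemma PQ_ub (e1 e2 : ℝ) (he1 : 0 < e1) (he2 : 0 < e2) (t z : ℝ) :
    t * z - PQ e1 e2 t ≤ e1 * |z| + e2 * z ^ 2 := by
  have hz1 : z ≤ |z| := le_abs_self z
  have hz2 : -z ≤ |z| := neg_le_abs z
  have hza : |z| ^ 2 = z ^ 2 := sq_abs z
  unfold PQ
  split_ifs with h1 h2
  · have hq : (t - e1) * |z| - e2 * |z| ^ 2 ≤ (t - e1) ^ 2 / (4 * e2) := by
      rw [le_div_iff₀ (by positivity)]
      nlinarith [sq_nonneg (t - e1 - 2 * e2 * |z|)]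
    rw [sq_abs] at hq
    nlinarith [mul_le_mul_of_nonneg_left hz1 (le_of_lt (lt_trans he1 h1))]
  · have hq : (-t - e1) * |z| - e2 * |z| ^ 2 ≤ (t + e1) ^ 2 / (4 * e2) := by
      rw [le_div_iff₀ (by positivity)]
      nlinarith [sq_nonneg (t + e1 + 2 * e2 * |z|)]
    rw [sq_abs] at hq
    have ht : 0 < -t := by linarith
    nlinarith [mul_le_mul_of_nonneg_left hz2 (le_of_lt ht)]
  · have habs : |t| ≤ e1 := abs_le.mpr ⟨by linarith [not_lt.mp h2], not_lt.mp h1⟩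
    have h3 : t * z ≤ |t| * |z| := by
      calc t * z ≤ |t * z| := le_abs_self _
        _ = |t| * |z| := abs_mul t z
    nlinarith [abs_nonneg z, sq_nonneg z]

lemma PQ_eq (e1 e2 : ℝ) (he1 : 0 < e1) (he2 : 0 < e2) (z : ℝ) :
    ∃ t : ℝ, t * z - PQ e1 e2 t = e1 * |z| + e2 * z ^ 2 := by
  rcases lt_trichotomy z 0 with hz | hz | hz
  · refine ⟨-e1 + 2 * e2 * z, ?_⟩
    have h2 : -e1 + 2 * e2 * z < -e1 := by nlinarith
    have h1 : ¬ e1 < -e1 + 2 * e2 * z := by nlinarith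
    rw [PQ, if_neg h1, if_pos h2, abs_of_neg hz]
    field_simp
    ring
  · refine ⟨0, ?_⟩
    have h1 : ¬ e1 < (0 : ℝ) := not_lt.mpr he1.le
    have h2 : ¬ (0 : ℝ) < -e1 := by simp [he1.le]
    rw [PQ, if_neg h1, if_neg (by linarith)]
    simp [hz]
  · refine ⟨e1 + 2 * e2 * z, ?_⟩
    have h1 : e1 < e1 + 2 * e2 * z := by nlinarith
    rw [PQ, if_pos h1, abs_of_pos hz]
    field_simp
    ring

/-- for `ε₁, ε₂ > 0`, the Fenchel conjugate of `δ ↦ Σᵢ PQ_{ε₁,ε₂}(δᵢ)` on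
`ℝᵈ` is the elastic net penalty: `sup_δ (⟨δ, z⟩ − Σᵢ PQ_{ε₁,ε₂}(δᵢ)) = ε₁‖z‖₁ + ε₂‖z‖₂²`. -/
theorem stmt_9 {d : ℕ} (e1 e2 : ℝ) (he1 : 0 < e1) (he2 : 0 < e2) (z : Fin d → ℝ) :
    (⨆ δ : Fin d → ℝ,
        (((∑ i, δ i * z i) - ∑ i, PQ e1 e2 (δ i) : ℝ) : EReal))
      = ((e1 * ∑ i, |z i| + e2 * ∑ i, z i ^ 2 : ℝ) : EReal) := by
  apply le_antisymm
  · refine iSup_le fun δ => ?_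
    rw [EReal.coe_le_coe_iff, ← Finset.sum_sub_distrib, Finset.mul_sum, Finset.mul_sum,
      ← Finset.sum_add_distrib]
    exact Finset.sum_le_sum fun i _ => PQ_ub e1 e2 he1 he2 (δ i) (z i)
  · set δ₀ : Fin d → ℝ := fun i => Classical.choose (PQ_eq e1 e2 he1 he2 (z i))
    refine le_iSup_of_le δ₀ (le_of_eq ?_)
    congr 1
    rw [Finset.mul_sum, Finset.mul_sum, ← Finset.sum_add_distrib, ← Finset.sum_sub_distrib]
    exact (Finset.sum_congr rfl fun i _ =>
      Classical.choose_spec (PQ_eq e1 e2 he1 he2 (z i))).symm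
end

section
/- Fix ε₁ > 0 and ε₂ > 0, and let z ∈ ℝᵈ. The vector δ* ∈ ℝᵈ with coordinates δ*_i = ε₁·sign(z_i) + 2ε₂·z_i (where sign(0) = 0) satisfies ⟨δ*, z⟩ − Σ_{i=1}^d PQ_{ε₁,ε₂}(δ*_i) = ε₁‖z‖₁ + ε₂‖z‖₂²; hence δ* attains the maximum of δ ↦ ⟨δ, z⟩ − Σ_i PQ_{ε₁,ε₂}(δ_i) over ℝᵈ. -/
lemma pq_key_eq (e1 e2 : ℝ) (he1 : 0 < e1) (he2 : 0 < e2) (z : ℝ) :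
    (e1 * Real.sign z + 2 * e2 * z) * z - PQ e1 e2 (e1 * Real.sign z + 2 * e2 * z)
      = e1 * |z| + e2 * z ^ 2 := by
  rcases lt_trichotomy z 0 with hz | hz | hz
  · rw [Real.sign_of_neg hz]
    unfold PQ
    rw [if_neg (by nlinarith), if_pos (by nlinarith)]
    rw [abs_of_neg hz]
    field_simp
    ring
  · subst hz
    simp [PQ, he1, not_lt.2 he1.le, not_lt.2 (neg_nonpos.2 he1.le)]
  · rw [Real.sign_of_pos hz]
    unfold PQ
    rw [if_pos (by nlinarith)]
    rw [abs_of_pos hz]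
    field_simp
    ring

lemma pq_key_le (e1 e2 : ℝ) (he1 : 0 < e1) (he2 : 0 < e2) (z t : ℝ) :
    t * z - PQ e1 e2 t ≤ e1 * |z| + e2 * z ^ 2 := by
  have habs1 : z ≤ |z| := le_abs_self z
  have habs2 : -|z| ≤ z := neg_abs_le z
  have habs0 : 0 ≤ |z| := abs_nonneg z
  unfold PQ
  split_ifs with h1 h2
  · have htz : t * z ≤ t * |z| := by nlinarith
    have hd : (t - e1) * |z| - e2 * |z| ^ 2 ≤ (t - e1) ^ 2 / (4 * e2) := by
      rw [le_div_iff₀ (show (0:ℝ) < 4 * e2 by linarith)]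
      nlinarith [sq_nonneg (t - e1 - 2 * e2 * |z|)]
    rw [sq_abs] at hd
    linarith
  · have htz : t * z ≤ t * (-|z|) := by nlinarith
    have hd : (-t - e1) * |z| - e2 * |z| ^ 2 ≤ (t + e1) ^ 2 / (4 * e2) := by
      rw [le_div_iff₀ (show (0:ℝ) < 4 * e2 by linarith)]
      nlinarith [sq_nonneg (t + e1 + 2 * e2 * |z|)]
    rw [sq_abs] at hd
    nlinarith
  · push_neg at h1 h2
    nlinarith [mul_nonneg (sub_nonneg.2 h1) (sub_nonneg.2 habs1),
      mul_nonneg (by linarith : (0:ℝ) ≤ e1 + t) (by linarith : (0:ℝ) ≤ |z| + z),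
      sq_nonneg z]

/-- for `ε₁, ε₂ > 0` and `z ∈ ℝᵈ`, the vector `δ*` with coordinates
`δ*_i = ε₁ sign(z_i) + 2ε₂ z_i` satisfies
`⟨δ*, z⟩ − Σᵢ PQ_{ε₁,ε₂}(δ*_i) = ε₁‖z‖₁ + ε₂‖z‖₂²`; hence `δ*` attains the maximum of
`δ ↦ ⟨δ, z⟩ − Σᵢ PQ_{ε₁,ε₂}(δᵢ)` over `ℝᵈ`. -/
theorem stmt_10 {d : ℕ} (e1 e2 : ℝ) (he1 : 0 < e1) (he2 : 0 < e2) (z : Fin d → ℝ) :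
    let δs : Fin d → ℝ := fun i => e1 * Real.sign (z i) + 2 * e2 * z i
    (∑ i, δs i * z i - ∑ i, PQ e1 e2 (δs i)
        = e1 * ∑ i, |z i| + e2 * ∑ i, z i ^ 2) ∧
    (∀ δ : Fin d → ℝ,
      ∑ i, δ i * z i - ∑ i, PQ e1 e2 (δ i)
        ≤ ∑ i, δs i * z i - ∑ i, PQ e1 e2 (δs i)) := by
  intro δs
  have heq : ∑ i, δs i * z i - ∑ i, PQ e1 e2 (δs i)
      = e1 * ∑ i, |z i| + e2 * ∑ i, z i ^ 2 := by
    rw [← Finset.sum_sub_distrib, Finset.mul_sum, Finset.mul_sum, ← Finset.sum_add_distrib]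
    exact Finset.sum_congr rfl fun i _ => pq_key_eq e1 e2 he1 he2 (z i)
  refine ⟨heq, fun δ => ?_⟩
  rw [heq, ← Finset.sum_sub_distrib, Finset.mul_sum, Finset.mul_sum,
    ← Finset.sum_add_distrib]
  exact Finset.sum_le_sum fun i _ => pq_key_le e1 e2 he1 he2 (z i) (δ i)
end

section
/- Let L: ℝᵈ → ℝ be differentiable and λ-smooth, let x ∈ ℝᵈ, and let ε ≥ 0. Then the ℓ∞-constrained adversarial loss satisfies |sup_{‖δ‖∞ ≤ ε} L(x + δ) − L(x) − ε‖∇L(x)‖₁| ≤ λ·d·ε²/2. -/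
/-! Along the segment `t ↦ x + t • δ`, the error of the first-order approximation of `L` has
derivative of norm at most `λ t ‖δ‖²`, so it is at most `λ ‖δ‖² / 2 ≤ λ d ε² / 2` on the box
`‖δ‖∞ ≤ ε`. Over that box the linear term `⟪∇L(x), δ⟫` is at most `ε ‖∇L(x)‖₁`, with equality
at `δ = ε • sign ∇L(x)`; hence the supremum lies within `λ d ε² / 2` of `L(x) + ε ‖∇L(x)‖₁`. -/

open InnerProductSpace Set

theorem norm_sub_sub_fderiv_le_of_lipschitz_fderiv {E F : Type*}
    [NormedAddCommGroup E] [NormedSpace ℝ E] [NormedAddCommGroup F] [NormedSpace ℝ F]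
    {f : E → F} {K : ℝ} (hf : Differentiable ℝ f)
    (hK : ∀ x z, ‖fderiv ℝ f x - fderiv ℝ f z‖ ≤ K * ‖x - z‖) (x y : E) :
    ‖f y - f x - fderiv ℝ f x (y - x)‖ ≤ K / 2 * ‖y - x‖ ^ 2 := by
  set v := y - x
  set φ : ℝ → F := fun t => f (x + t • v) - f x - t • fderiv ℝ f x v
  have hφ (t : ℝ) : HasDerivAt φ (fderiv ℝ f (x + t • v) v - fderiv ℝ f x v) t := by
    have hline : HasDerivAt (fun t : ℝ => x + t • v) v t := by
      simpa using ((hasDerivAt_id t).smul_const v).const_add x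
    exact ((((hf _).hasFDerivAt.comp_hasDerivAt t hline).sub_const (f x)).sub
      ((hasDerivAt_id t).smul_const (fderiv ℝ f x v))).congr_deriv (by simp)
  have hbound (t : ℝ) : HasDerivAt (fun t => K * ‖v‖ ^ 2 / 2 * t ^ 2) (K * ‖v‖ ^ 2 * t) t :=
    ((hasDerivAt_pow 2 t).const_mul _).congr_deriv (by norm_num; ring)
  have hφ_le (t : ℝ) (ht : t ∈ Ico (0 : ℝ) 1) :
      ‖fderiv ℝ f (x + t • v) v - fderiv ℝ f x v‖ ≤ K * ‖v‖ ^ 2 * t :=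
    calc ‖fderiv ℝ f (x + t • v) v - fderiv ℝ f x v‖
        ≤ ‖fderiv ℝ f (x + t • v) - fderiv ℝ f x‖ * ‖v‖ :=
          (fderiv ℝ f (x + t • v) - fderiv ℝ f x).le_opNorm v
      _ ≤ K * ‖t • v‖ * ‖v‖ := by
          gcongr
          simpa using hK (x + t • v) x
      _ = K * ‖v‖ ^ 2 * t := by
          rw [norm_smul, Real.norm_of_nonneg ht.1]; ring
  have := image_norm_le_of_norm_deriv_right_le_deriv_boundary
    (fun t _ => (hφ t).continuousAt.continuousWithinAt) (fun t _ => (hφ t).hasDerivWithinAt)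
    (by simp [φ]) hbound hφ_le (right_mem_Icc.2 zero_le_one)
  convert this using 1
  · simp [φ, v]
  · ring

theorem abs_sub_sub_inner_gradient_le_of_lipschitz_gradient {E : Type*}
    [NormedAddCommGroup E] [InnerProductSpace ℝ E] [CompleteSpace E]
    {f : E → ℝ} {K : ℝ} (hf : Differentiable ℝ f)
    (hK : ∀ x z, ‖gradient f x - gradient f z‖ ≤ K * ‖x - z‖) (x y : E) :
    |f y - f x - ⟪gradient f x, y - x⟫_ℝ| ≤ K / 2 * ‖y - x‖ ^ 2 := by
  have hK' (x z : E) : ‖fderiv ℝ f x - fderiv ℝ f z‖ ≤ K * ‖x - z‖ := by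
    simpa [gradient, ← map_sub] using hK x z
  simpa [gradient, toDual_symm_apply] using norm_sub_sub_fderiv_le_of_lipschitz_fderiv hf hK' x y

theorem nonneg_of_norm_sub_le_mul_norm_sub {E F : Type*} [NormedAddCommGroup E] [Nontrivial E]
    [SeminormedAddCommGroup F] {g : E → F} {K : ℝ} (hK : ∀ x z, ‖g x - g z‖ ≤ K * ‖x - z‖) :
    0 ≤ K := by
  obtain ⟨x, z, hxz⟩ := exists_pair_ne E
  exact nonneg_of_mul_nonneg_left ((norm_nonneg _).trans (hK x z))
    (norm_pos_iff.2 (sub_ne_zero.2 hxz))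

section EuclideanSpace

variable {ι : Type*} [Fintype ι]

theorem EuclideanSpace.norm_sq_le_card_mul_sq {δ : EuclideanSpace ℝ ι} {ε : ℝ}
    (hδ : ∀ i, |δ i| ≤ ε) : ‖δ‖ ^ 2 ≤ Fintype.card ι * ε ^ 2 := by
  rw [EuclideanSpace.real_norm_sq_eq]
  calc ∑ i, δ i ^ 2 ≤ ∑ _i : ι, ε ^ 2 :=
        Finset.sum_le_sum fun i _ => sq_le_sq' (abs_le.1 (hδ i)).1 (abs_le.1 (hδ i)).2
    _ = Fintype.card ι * ε ^ 2 := by simp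

theorem EuclideanSpace.real_inner_eq_sum (g δ : EuclideanSpace ℝ ι) :
    ⟪g, δ⟫_ℝ = ∑ i, g i * δ i := by
  simp only [PiLp.inner_apply, RCLike.inner_apply, conj_trivial, mul_comm]

theorem EuclideanSpace.inner_le_mul_sum_abs {g δ : EuclideanSpace ℝ ι} {ε : ℝ}
    (hδ : ∀ i, |δ i| ≤ ε) : ⟪g, δ⟫_ℝ ≤ ε * ∑ i, |g i| := by
  rw [EuclideanSpace.real_inner_eq_sum, Finset.mul_sum]
  refine Finset.sum_le_sum fun i _ => ?_
  calc g i * δ i ≤ |g i| * |δ i| := abs_mul (g i) (δ i) ▸ le_abs_self _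
    _ ≤ ε * |g i| := by rw [mul_comm]; gcongr; exact hδ i

theorem EuclideanSpace.exists_abs_le_inner_eq_mul_sum_abs (g : EuclideanSpace ℝ ι) {ε : ℝ}
    (hε : 0 ≤ ε) : ∃ δ : EuclideanSpace ℝ ι, (∀ i, |δ i| ≤ ε) ∧ ⟪g, δ⟫_ℝ = ε * ∑ i, |g i| := by
  refine ⟨WithLp.toLp 2 fun i => ε * SignType.sign (g i), fun i => ?_, ?_⟩
  · rw [PiLp.toLp_apply, abs_mul, abs_of_nonneg hε]
    refine mul_le_of_le_one_right hε ?_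
    cases SignType.sign (g i) <;> simp
  · simp only [EuclideanSpace.real_inner_eq_sum, Finset.mul_sum]
    congr! 1 with i
    rw [mul_left_comm, self_mul_sign]

theorem EuclideanSpace.abs_sub_sub_inner_gradient_le_of_abs_le {f : EuclideanSpace ℝ ι → ℝ}
    {K ε : ℝ} (hf : Differentiable ℝ f)
    (hK : ∀ x z, ‖gradient f x - gradient f z‖ ≤ K * ‖x - z‖) (x : EuclideanSpace ℝ ι)
    {δ : EuclideanSpace ℝ ι} (hδ : ∀ i, |δ i| ≤ ε) :
    |f (x + δ) - f x - ⟪gradient f x, δ⟫_ℝ| ≤ K * Fintype.card ι * ε ^ 2 / 2 := by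
  cases isEmpty_or_nonempty ι
  · simp [Subsingleton.elim δ 0]
  have hK₀ : 0 ≤ K := nonneg_of_norm_sub_le_mul_norm_sub hK
  calc |f (x + δ) - f x - ⟪gradient f x, δ⟫_ℝ| ≤ K / 2 * ‖δ‖ ^ 2 := by
        simpa using abs_sub_sub_inner_gradient_le_of_lipschitz_gradient hf hK x (x + δ)
    _ ≤ K / 2 * (Fintype.card ι * ε ^ 2) := by
        gcongr; exact EuclideanSpace.norm_sq_le_card_mul_sq hδ
    _ = K * Fintype.card ι * ε ^ 2 / 2 := by ring

end EuclideanSpace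

theorem abs_csSup_sub_le {s : Set ℝ} {c K : ℝ} (hle : ∀ r ∈ s, r ≤ c + K)
    (hge : ∃ r ∈ s, c - K ≤ r) : |sSup s - c| ≤ K := by
  obtain ⟨r, hr, hcr⟩ := hge
  rw [abs_sub_le_iff]
  constructor
  · linarith [csSup_le ⟨r, hr⟩ hle]
  · linarith [le_csSup ⟨c + K, hle⟩ hr]

/-- for a differentiable, λ-smooth `L : ℝᵈ → ℝ`, any `x` and `ε ≥ 0`, the
ℓ∞-constrained adversarial loss satisfies
`|sup_{‖δ‖∞ ≤ ε} L(x + δ) − L(x) − ε ‖∇L(x)‖₁| ≤ λ d ε² / 2`. -/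
theorem stmt_14 {d : ℕ} (L : EuclideanSpace ℝ (Fin d) → ℝ) (lam : ℝ)
    (hdiff : Differentiable ℝ L)
    (hsmooth : ∀ x z : EuclideanSpace ℝ (Fin d),
      ‖gradient L x - gradient L z‖ ≤ lam * ‖x - z‖)
    (x : EuclideanSpace ℝ (Fin d)) (ε : ℝ) (hε : 0 ≤ ε) :
    |(sSup {r : ℝ | ∃ δ : EuclideanSpace ℝ (Fin d), (∀ i, |δ i| ≤ ε) ∧ r = L (x + δ)}
        - L x - ε * ∑ i, |gradient L x i|)| ≤ lam * d * ε ^ 2 / 2 := by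
  have hlin {δ : EuclideanSpace ℝ (Fin d)} (hδ : ∀ i, |δ i| ≤ ε) :
      |L (x + δ) - L x - ⟪gradient L x, δ⟫_ℝ| ≤ lam * d * ε ^ 2 / 2 := by
    simpa using EuclideanSpace.abs_sub_sub_inner_gradient_le_of_abs_le hdiff hsmooth x hδ
  rw [sub_sub]
  apply abs_csSup_sub_le
  · rintro _ ⟨δ, hδ, rfl⟩
    linarith [(abs_le.1 (hlin hδ)).2, EuclideanSpace.inner_le_mul_sum_abs (g := gradient L x) hδ]
  · obtain ⟨δ, hδ, hinner⟩ := EuclideanSpace.exists_abs_le_inner_eq_mul_sum_abs (gradient L x) hε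
    exact ⟨_, ⟨δ, hδ, rfl⟩, by linarith [(abs_le.1 (hlin hδ)).1]⟩
end

section
/- Let L: ℝᵈ → ℝ be differentiable and λ-smooth, let x ∈ ℝᵈ, let ε ≥ 0, and fix a partition of {1,…,d} into nonempty disjoint subsets S₁,…,S_t whose union is {1,…,d}. Then the group-norm-constrained adversarial loss satisfies |sup_{‖δ‖_{2,∞} ≤ ε} L(x + δ) − L(x) − ε‖∇L(x)‖_{2,1}| ≤ λ·t·ε²/2. -/
/-!
Smoothness gives the descent bound `|L (x + δ) - L x - ⟪∇L x, δ⟫| ≤ λ ‖δ‖² / 2`, and a perturbation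
with `‖δ‖_{2,∞} ≤ ε` has `‖δ‖² ≤ t ε²`. So the constrained supremum of `L (x + δ)` is within
`λ t ε² / 2` of the constrained supremum of the linearization `L x + ⟪∇L x, δ⟫`. The latter is
`L x + ε ‖∇L x‖_{2,1}`: blockwise Cauchy–Schwarz bounds it, and it is attained by rescaling each
block of `∇L x` to Euclidean length `ε`.
-/

open Finset
open scoped RealInnerProductSpace

section BlockNorm

variable {ι κ : Type*} [Fintype ι] [DecidableEq κ] (b : ι → κ)

/-- `‖v_{S_j}‖₂` for the block `S_j = b ⁻¹' {j}`. -/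
noncomputable def blockNorm (v : ι → ℝ) (j : κ) : ℝ :=
  √(∑ i ∈ univ with b i = j, v i ^ 2)

/-- Maximizes `∑ i, v i * w i` under `blockNorm b w ≤ ε`; blocks where `v` vanishes stay `0`,
as `ε / 0 = 0`. -/
noncomputable def blockAlign (v : ι → ℝ) (ε : ℝ) (i : ι) : ℝ :=
  ε / blockNorm b v (b i) * v i

variable {b}

lemma sq_blockNorm (v : ι → ℝ) (j : κ) :
    blockNorm b v j ^ 2 = ∑ i ∈ univ with b i = j, v i ^ 2 :=
  Real.sq_sqrt (sum_nonneg fun _ _ => sq_nonneg _)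

lemma blockNorm_blockAlign_le (v : ι → ℝ) {ε : ℝ} (hε : 0 ≤ ε) (j : κ) :
    blockNorm b (blockAlign b v ε) j ≤ ε := by
  have hblock : ∑ i ∈ univ with b i = j, blockAlign b v ε i ^ 2
      = (ε / blockNorm b v j * blockNorm b v j) ^ 2 := by
    rw [mul_pow, sq_blockNorm, mul_sum]
    refine sum_congr rfl fun i hi => ?_
    rw [blockAlign, (mem_filter.mp hi).2, mul_pow]
  rw [blockNorm, hblock, Real.sqrt_sq_eq_abs]
  rcases eq_or_ne (blockNorm b v j) 0 with h | h
  · simpa [h] using hε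
  · rw [div_mul_cancel₀ _ h, abs_of_nonneg hε]

variable [Fintype κ]

lemma sum_sq_le_card_mul_sq_of_blockNorm_le {v : ι → ℝ} {ε : ℝ} (hv : ∀ j, blockNorm b v j ≤ ε) :
    ∑ i, v i ^ 2 ≤ Fintype.card κ * ε ^ 2 := by
  rw [← sum_fiberwise univ b]
  calc ∑ j, ∑ i ∈ univ with b i = j, v i ^ 2
      ≤ ∑ _j : κ, ε ^ 2 := sum_le_sum fun j _ => by
        rw [← sq_blockNorm]; exact pow_le_pow_left₀ (Real.sqrt_nonneg _) (hv j) 2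
    _ = Fintype.card κ * ε ^ 2 := by simp

lemma sum_mul_le_of_blockNorm_le (v : ι → ℝ) {w : ι → ℝ} {ε : ℝ}
    (hw : ∀ j, blockNorm b w j ≤ ε) :
    ∑ i, v i * w i ≤ ε * ∑ j, blockNorm b v j := by
  rw [← sum_fiberwise univ b, mul_sum]
  refine sum_le_sum fun j _ => ?_
  calc ∑ i ∈ univ with b i = j, v i * w i
      ≤ blockNorm b v j * blockNorm b w j := Real.sum_mul_le_sqrt_mul_sqrt _ _ _
    _ ≤ blockNorm b v j * ε := mul_le_mul_of_nonneg_left (hw j) (Real.sqrt_nonneg _)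
    _ = ε * blockNorm b v j := mul_comm _ _

lemma sum_mul_blockAlign (v : ι → ℝ) (ε : ℝ) :
    ∑ i, v i * blockAlign b v ε i = ε * ∑ j, blockNorm b v j := by
  rw [← sum_fiberwise univ b, mul_sum]
  refine sum_congr rfl fun j _ => ?_
  have hblock : ∑ i ∈ univ with b i = j, v i * blockAlign b v ε i
      = ε / blockNorm b v j * blockNorm b v j ^ 2 := by
    rw [sq_blockNorm, mul_sum]
    refine sum_congr rfl fun i hi => ?_
    rw [blockAlign, (mem_filter.mp hi).2]
    ring
  rw [hblock]
  rcases eq_or_ne (blockNorm b v j) 0 with h | h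
  · simp [h]
  · field_simp

lemma norm_sq_le_card_mul_sq_of_blockNorm_le {δ : EuclideanSpace ℝ ι} {ε : ℝ}
    (hδ : ∀ j, blockNorm b δ j ≤ ε) : ‖δ‖ ^ 2 ≤ Fintype.card κ * ε ^ 2 := by
  rw [EuclideanSpace.real_norm_sq_eq]
  exact sum_sq_le_card_mul_sq_of_blockNorm_le hδ

end BlockNorm

lemma abs_sSup_image_sub_le {α : Type*} {C : Set α} {f φ : α → ℝ} {m M : ℝ} {δ₀ : α}
    (hδ₀ : δ₀ ∈ C) (hφδ₀ : φ δ₀ = m) (hφ : ∀ δ ∈ C, φ δ ≤ m)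
    (hf : ∀ δ ∈ C, |f δ - φ δ| ≤ M) :
    |sSup (f '' C) - m| ≤ M := by
  have hub : ∀ r ∈ f '' C, r ≤ m + M := by
    rintro _ ⟨δ, hδ, rfl⟩
    linarith [(abs_le.mp (hf δ hδ)).2, hφ δ hδ]
  have hlow : m - M ≤ sSup (f '' C) := by
    have := le_csSup ⟨_, hub⟩ (Set.mem_image_of_mem f hδ₀)
    linarith [(abs_le.mp (hf δ₀ hδ₀)).1]
  rw [abs_le]
  constructor
  · linarith
  · linarith [csSup_le ⟨_, Set.mem_image_of_mem f hδ₀⟩ hub]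

lemma nonneg_of_forall_norm_sub_le_mul {E F : Type*} [NormedAddCommGroup E] [Nontrivial E]
    [SeminormedAddCommGroup F] {f : E → F} {lam : ℝ}
    (hf : ∀ x z, ‖f x - f z‖ ≤ lam * ‖x - z‖) : 0 ≤ lam := by
  obtain ⟨x, hx⟩ := exists_ne (0 : E)
  have := (norm_nonneg _).trans (hf x 0)
  rw [sub_zero] at this
  exact nonneg_of_mul_nonneg_left this (norm_pos_iff.mpr hx)

section Descent

variable {E : Type*} [NormedAddCommGroup E] [InnerProductSpace ℝ E] [CompleteSpace E]

lemma abs_sub_sub_inner_gradient_le {L : E → ℝ} {lam : ℝ} (hdiff : Differentiable ℝ L)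
    (hsmooth : ∀ x z, ‖gradient L x - gradient L z‖ ≤ lam * ‖x - z‖) (x δ : E) :
    |L (x + δ) - L x - ⟪gradient L x, δ⟫| ≤ lam / 2 * ‖δ‖ ^ 2 := by
  set f : ℝ → ℝ := fun s => L (x + s • δ) - L x - s * ⟪gradient L x, δ⟫
  set f' : ℝ → ℝ := fun s => ⟪gradient L (x + s • δ) - gradient L x, δ⟫
  have hf : ∀ s, HasDerivAt f (f' s) s := by
    intro s
    have hpath : HasDerivAt (fun s : ℝ => x + s • δ) δ s := by
      simpa using ((hasDerivAt_id s).smul_const δ).const_add x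
    have hL := (hdiff (x + s • δ)).hasGradientAt.hasFDerivAt.comp_hasDerivAt s hpath
    rw [InnerProductSpace.toDual_apply_apply] at hL
    have := (hL.sub_const (L x)).sub (hasDerivAt_mul_const ⟪gradient L x, δ⟫)
    rwa [← inner_sub_left] at this
  have hB : ∀ s, HasDerivAt (fun s => lam / 2 * ‖δ‖ ^ 2 * s ^ 2) (lam * ‖δ‖ ^ 2 * s) s :=
    fun s => ((hasDerivAt_pow 2 s).const_mul _).congr_deriv (by push_cast; ring)
  have hbound : ∀ s ∈ Set.Ico (0 : ℝ) 1, ‖f' s‖ ≤ lam * ‖δ‖ ^ 2 * s := by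
    intro s hs
    calc ‖f' s‖ ≤ ‖gradient L (x + s • δ) - gradient L x‖ * ‖δ‖ := abs_real_inner_le_norm _ _
      _ ≤ lam * ‖(x + s • δ) - x‖ * ‖δ‖ := by gcongr; exact hsmooth _ _
      _ = lam * ‖δ‖ ^ 2 * s := by
        rw [add_sub_cancel_left, norm_smul, Real.norm_of_nonneg hs.1]; ring
  have := image_norm_le_of_norm_deriv_right_le_deriv_boundary
    (fun s _ => (hf s).continuousAt.continuousWithinAt)
    (fun s _ => (hf s).hasDerivWithinAt) (by simp [f]) hB hbound
    (Set.right_mem_Icc.mpr zero_le_one)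
  simpa [f] using this

end Descent

/-- for a differentiable, λ-smooth `L : ℝᵈ → ℝ`, any `x`, `ε ≥ 0`, and a
partition of `{1,…,d}` into nonempty blocks (encoded by a surjective block-assignment map
`b : Fin d → Fin t`), the group-norm-constrained adversarial loss satisfies
`|sup_{‖δ‖_{2,∞} ≤ ε} L(x + δ) − L(x) − ε ‖∇L(x)‖_{2,1}| ≤ λ t ε² / 2`. -/
theorem stmt_15 {d t : ℕ} (L : EuclideanSpace ℝ (Fin d) → ℝ) (lam : ℝ)
    (hdiff : Differentiable ℝ L)
    (hsmooth : ∀ x z : EuclideanSpace ℝ (Fin d),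
      ‖gradient L x - gradient L z‖ ≤ lam * ‖x - z‖)
    (x : EuclideanSpace ℝ (Fin d)) (ε : ℝ) (hε : 0 ≤ ε)
    (b : Fin d → Fin t) (hb : Function.Surjective b) :
    |(sSup {r : ℝ | ∃ δ : EuclideanSpace ℝ (Fin d),
          (∀ j, Real.sqrt (∑ i ∈ Finset.univ.filter (fun i => b i = j), δ i ^ 2) ≤ ε) ∧
          r = L (x + δ)}
        - L x
        - ε * ∑ j, Real.sqrt
            (∑ i ∈ Finset.univ.filter (fun i => b i = j), gradient L x i ^ 2))|
      ≤ lam * t * ε ^ 2 / 2 := by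
  set g := gradient L x
  set C := {δ : EuclideanSpace ℝ (Fin d) | ∀ j, blockNorm b δ j ≤ ε}
  have hset : {r : ℝ | ∃ δ : EuclideanSpace ℝ (Fin d),
      (∀ j, Real.sqrt (∑ i ∈ Finset.univ.filter (fun i => b i = j), δ i ^ 2) ≤ ε) ∧
      r = L (x + δ)} = (fun δ => L (x + δ)) '' C := by
    ext r; simp [C, blockNorm, eq_comm]
  have hinner : ∀ δ : EuclideanSpace ℝ (Fin d), ⟪g, δ⟫ = ∑ i, g i * δ i := fun δ => by
    simp [PiLp.inner_apply, mul_comm]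
  -- for `d = 0` the smoothness constant may be negative, but then `t = 0` by surjectivity
  have hlam : 0 ≤ lam ∨ t = 0 := by
    rcases isEmpty_or_nonempty (Fin d) with hd | hd
    · exact Or.inr (by simpa using Fintype.card_eq_zero_iff.mpr hb.isEmpty)
    · exact Or.inl (nonneg_of_forall_norm_sub_le_mul hsmooth)
  have hquad : ∀ δ ∈ C, lam / 2 * ‖δ‖ ^ 2 ≤ lam * t * ε ^ 2 / 2 := by
    intro δ hδ
    have hnorm : ‖δ‖ ^ 2 ≤ t * ε ^ 2 := by
      simpa using norm_sq_le_card_mul_sq_of_blockNorm_le hδ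
    rcases hlam with hlam | rfl
    · nlinarith
    · have : ‖δ‖ ^ 2 = 0 := le_antisymm (by simpa using hnorm) (sq_nonneg _)
      simp [this]
  rw [hset, sub_sub]
  refine abs_sSup_image_sub_le (φ := fun δ => L x + ⟪g, δ⟫)
    (δ₀ := WithLp.toLp 2 (blockAlign b g ε)) (blockNorm_blockAlign_le g hε) ?_ ?_ ?_
  · simp only [hinner, sum_mul_blockAlign]; rfl
  · intro δ hδ
    simpa [hinner, blockNorm] using sum_mul_le_of_blockNorm_le g hδ
  · intro δ hδ
    rw [← sub_sub]
    exact (abs_sub_sub_inner_gradient_le hdiff hsmooth x δ).trans (hquad δ hδ)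
end
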